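/- Let N ≥ 2 be an integer. For each k > 0 let (c(k), φ(·;k)) be the unique pair with c(k) > 0 and φ(·;k) : [0,1] → ℝ continuous on [0,1], twice continuously differentiable on (0,1], φ(0;k) = 0, φ'(r;k) → 0 as r → 0+, φ''(r;k)/(1+φ'(r;k)^2) + ((N-1)/r)φ'(r;k) = c(k) on (0,1], and φ'(1;k) = k. Then for every fixed r ∈ (0,1], both φ(r;k) → ∞ and φ'(r;k) → ∞ as k → ∞. -/

import Mathlib

/-!
With `g = arctan φ'` the equation reads `g' = c - (N - 1) φ' / r`. Comparing `g` near `r = 0+`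
with the barriers `0` and `arctan (c r / (N - 1))` gives `0 ≤ φ' ≤ c r / (N - 1)`; hence
`g' ≥ 0`, so `φ'` is nondecreasing, and `φ'(1) = k` forces `c ≥ (N - 1) k`. Since `g` takes
values in `(-π/2, π/2)`, it rises by less than `π` over `[r/2, r]`, while its derivative there is
at least `c - 2 (N - 1) φ'(r) / r`. This gives `φ'(r) ≥ k r / 2 - π / (N - 1)`, and then
`φ(r) ≥ (r/2) φ'(r/2)` also grows linearly in `k`.
-/

open Set Filter Topology Real

/-- A translating profile for the radially symmetric mean curvature flow with speed `c` and
contact slope `k`: `φ` is continuous on `[0,1]`, twice continuously differentiable on `(0,1]`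
(with derivatives `φ'`, `φ''`), `φ(0) = 0`, `φ'(r) → 0` as `r → 0+`,
`φ''/(1+φ'^2) + ((N-1)/r) φ' = c` on `(0,1]`, and `φ'(1) = k`. -/
def IsTranslatingProfile (N : ℕ) (k c : ℝ) (phi phi' phi'' : ℝ → ℝ) : Prop :=
  ContinuousOn phi (Icc 0 1) ∧
  (∀ r ∈ Ioc (0:ℝ) 1, HasDerivWithinAt phi (phi' r) (Ioc 0 1) r) ∧
  (∀ r ∈ Ioc (0:ℝ) 1, HasDerivWithinAt phi' (phi'' r) (Ioc 0 1) r) ∧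
  ContinuousOn phi' (Ioc 0 1) ∧
  ContinuousOn phi'' (Ioc 0 1) ∧
  phi 0 = 0 ∧
  Tendsto phi' (nhdsWithin 0 (Ioi 0)) (nhds 0) ∧
  (∀ r ∈ Ioc (0:ℝ) 1, phi'' r / (1 + (phi' r) ^ 2) + (((N : ℝ) - 1) / r) * phi' r = c) ∧
  phi' 1 = k

theorem nonpos_of_tendsto_zero_of_deriv_neg {h h' : ℝ → ℝ} {b : ℝ}
    (hcont : ContinuousOn h (Ioc 0 b)) (hderiv : ∀ x ∈ Ioo 0 b, HasDerivAt h (h' x) x)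
    (hlim : Tendsto h (𝓝[>] 0) (𝓝 0)) (hneg : ∀ x ∈ Ioo 0 b, 0 < h x → h' x < 0) :
    ∀ x ∈ Ioc 0 b, h x ≤ 0 := by
  intro x hx
  refine le_of_forall_pos_le_add fun δ hδ => ?_
  obtain ⟨s, hsδ, hs⟩ :=
    ((hlim.eventually (gt_mem_nhds hδ)).and (Ioo_mem_nhdsGT hx.1)).exists
  have hcomp := image_le_of_deriv_right_lt_deriv_boundary (B := fun _ => δ) (B' := 0)
    (hcont.mono fun y hy => ⟨hs.1.trans_le hy.1, hy.2.trans hx.2⟩)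
    (fun y hy => (hderiv y ⟨hs.1.trans_le hy.1, hy.2.trans_le hx.2⟩).hasDerivWithinAt)
    hsδ.le (fun _ => hasDerivAt_const _ _)
    (fun y hy hyδ => hneg y ⟨hs.1.trans_le hy.1, hy.2.trans_le hx.2⟩ (hyδ ▸ hδ))
    ⟨hs.2.le, le_rfl⟩
  simpa using hcomp

theorem tendsto_atTop_of_affine_le {f : ℝ → ℝ} {a b : ℝ} (ha : 0 < a)
    (hf : ∀ᶠ k in atTop, a * k - b ≤ f k) : Tendsto f atTop atTop :=
  tendsto_atTop_mono' _ hf <| by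
    simpa only [sub_eq_add_neg, id] using
      tendsto_atTop_add_const_right _ (-b) (tendsto_id.const_mul_atTop ha)

namespace IsTranslatingProfile

variable {N : ℕ} {k c : ℝ} {phi phi' phi'' : ℝ → ℝ} {r : ℝ}

theorem hasDerivAt (H : IsTranslatingProfile N k c phi phi' phi'') (hr : r ∈ Ioo 0 1) :
    HasDerivAt phi (phi' r) r :=
  (H.2.1 r (Ioo_subset_Ioc_self hr)).hasDerivAt (Ioc_mem_nhds hr.1 hr.2)

theorem hasDerivAt_arctan_slope (H : IsTranslatingProfile N k c phi phi' phi'')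
    (hr : r ∈ Ioo 0 1) :
    HasDerivAt (fun s => arctan (phi' s)) (c - ((N : ℝ) - 1) / r * phi' r) r := by
  have hode := H.2.2.2.2.2.2.2.1 r (Ioo_subset_Ioc_self hr)
  convert ((H.2.2.1 r (Ioo_subset_Ioc_self hr)).hasDerivAt (Ioc_mem_nhds hr.1 hr.2)).arctan
    using 1
  rw [← hode]
  ring

theorem continuousOn_arctan_slope (H : IsTranslatingProfile N k c phi phi' phi'') :
    ContinuousOn (fun s => arctan (phi' s)) (Ioc 0 1) :=
  continuous_arctan.comp_continuousOn H.2.2.2.1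

theorem tendsto_arctan_slope (H : IsTranslatingProfile N k c phi phi' phi'') :
    Tendsto (fun s => arctan (phi' s)) (𝓝[>] 0) (𝓝 0) := by
  simpa [Function.comp_def] using (continuous_arctan.tendsto 0).comp H.2.2.2.2.2.2.1

theorem slope_nonneg (H : IsTranslatingProfile N k c phi phi' phi'') (hN : 2 ≤ N)
    (hc : 0 ≤ c) (hr : r ∈ Ioc 0 1) : 0 ≤ phi' r := by
  have hN1 : (0 : ℝ) < N - 1 := sub_pos.2 (Nat.one_lt_cast.2 hN)
  have key := nonpos_of_tendsto_zero_of_deriv_neg (h := fun s => -arctan (phi' s))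
    H.continuousOn_arctan_slope.neg (fun x hx => (H.hasDerivAt_arctan_slope hx).neg)
    (by simpa using H.tendsto_arctan_slope.neg) (fun x hx hpos => by
      have hneg : phi' x < 0 := by simpa [arctan_nonneg] using hpos
      have : ((N : ℝ) - 1) / x * phi' x < 0 := mul_neg_of_pos_of_neg (div_pos hN1 hx.1) hneg
      linarith) r hr
  simpa [arctan_nonneg] using key

theorem slope_le (H : IsTranslatingProfile N k c phi phi' phi'') (hN : 2 ≤ N)
    (hc : 0 ≤ c) (hr : r ∈ Ioc 0 1) : phi' r ≤ c / (N - 1) * r := by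
  have hN1 : (0 : ℝ) < N - 1 := sub_pos.2 (Nat.one_lt_cast.2 hN)
  set A := c / ((N : ℝ) - 1)
  have hbarrier : ∀ x, HasDerivAt (fun s => arctan (A * s)) (1 / (1 + (A * x) ^ 2) * A) x :=
    fun x => by simpa using ((hasDerivAt_id x).const_mul A).arctan
  have hlim : Tendsto (fun s => arctan (A * s)) (𝓝[>] 0) (𝓝 0) := by
    simpa using (hbarrier 0).continuousAt.tendsto.mono_left nhdsWithin_le_nhds
  have key := nonpos_of_tendsto_zero_of_deriv_neg
    (h := fun s => arctan (phi' s) - arctan (A * s))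
    (H.continuousOn_arctan_slope.sub (by fun_prop))
    (fun x hx => (H.hasDerivAt_arctan_slope hx).sub (hbarrier x))
    (by simpa using H.tendsto_arctan_slope.sub hlim)
    (fun x hx hpos => by
      have habove : A * x < phi' x := arctan_strictMono.lt_iff_lt.1 (sub_pos.1 hpos)
      have hc_lt : c < ((N : ℝ) - 1) / x * phi' x := by
        calc c = ((N : ℝ) - 1) / x * (A * x) := by simp only [A]; field_simp [hN1.ne', hx.1.ne']
          _ < ((N : ℝ) - 1) / x * phi' x := mul_lt_mul_of_pos_left habove (div_pos hN1 hx.1)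
      have : 0 ≤ 1 / (1 + (A * x) ^ 2) * A := by positivity
      linarith) r hr
  exact arctan_strictMono.le_iff_le.1 (sub_nonpos.1 key)

theorem sub_one_mul_le_speed (H : IsTranslatingProfile N k c phi phi' phi'') (hN : 2 ≤ N)
    (hc : 0 ≤ c) : ((N : ℝ) - 1) * k ≤ c := by
  have hN1 : (0 : ℝ) < N - 1 := sub_pos.2 (Nat.one_lt_cast.2 hN)
  have h1 := H.slope_le hN hc ⟨one_pos, le_rfl⟩
  rw [H.2.2.2.2.2.2.2.2, mul_one, le_div_iff₀ hN1] at h1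
  linarith

theorem monotoneOn_slope (H : IsTranslatingProfile N k c phi phi' phi'') (hN : 2 ≤ N)
    (hc : 0 ≤ c) : MonotoneOn phi' (Ioc 0 1) := by
  have hN1 : (0 : ℝ) < N - 1 := sub_pos.2 (Nat.one_lt_cast.2 hN)
  have hg : MonotoneOn (fun s => arctan (phi' s)) (Ioc 0 1) := by
    refine monotoneOn_of_hasDerivWithinAt_nonneg (f' := fun x => c - ((N : ℝ) - 1) / x * phi' x)
      (convex_Ioc 0 1) H.continuousOn_arctan_slope
      (fun x hx => ?_) (fun x hx => ?_) <;> rw [interior_Ioc] at hx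
    · exact (H.hasDerivAt_arctan_slope hx).hasDerivWithinAt
    · rw [sub_nonneg]
      calc ((N : ℝ) - 1) / x * phi' x ≤ ((N : ℝ) - 1) / x * (c / (N - 1) * x) :=
            mul_le_mul_of_nonneg_left (H.slope_le hN hc (Ioo_subset_Ioc_self hx))
              (div_nonneg hN1.le hx.1.le)
        _ = c := by field_simp [hN1.ne', hx.1.ne']
  exact fun a ha b hb hab => arctan_strictMono.le_iff_le.1 (hg ha hb hab)

theorem le_slope (H : IsTranslatingProfile N k c phi phi' phi'') (hN : 2 ≤ N)
    (hc : 0 ≤ c) (hr : r ∈ Ioc 0 1) : r / 2 * k - π / (N - 1) ≤ phi' r := by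
  have hN1 : (0 : ℝ) < N - 1 := sub_pos.2 (Nat.one_lt_cast.2 hN)
  have hr2 : r / 2 ∈ Ioc 0 1 := ⟨half_pos hr.1, by linarith [hr.2]⟩
  obtain ⟨ξ, hξ, hmvt⟩ := exists_hasDerivAt_eq_slope (fun s => arctan (phi' s))
    (fun x => c - ((N : ℝ) - 1) / x * phi' x) (half_lt_self hr.1)
    (H.continuousOn_arctan_slope.mono fun x hx => ⟨hr2.1.trans_le hx.1, hx.2.trans hr.2⟩)
    (fun x hx => H.hasDerivAt_arctan_slope ⟨hr2.1.trans hx.1, hx.2.trans_le hr.2⟩)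
  have hξ' : ξ ∈ Ioc 0 1 := ⟨hr2.1.trans hξ.1, hξ.2.le.trans hr.2⟩
  have hrise : arctan (phi' r) - arctan (phi' (r / 2)) < π := by
    linarith [arctan_lt_pi_div_two (phi' r), neg_pi_div_two_lt_arctan (phi' (r / 2))]
  have hdamp : ((N : ℝ) - 1) / ξ * phi' ξ ≤ ((N : ℝ) - 1) / (r / 2) * phi' r :=
    mul_le_mul (div_le_div_of_nonneg_left hN1.le hr2.1 hξ.1.le)
      (H.monotoneOn_slope hN hc hξ' hr hξ.2.le) (H.slope_nonneg hN hc hξ')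
      (div_nonneg hN1.le hr2.1.le)
  have hbalance : c * (r / 2) - ((N : ℝ) - 1) * phi' r < π := by
    rw [eq_div_iff (by linarith [hr.1])] at hmvt
    calc c * (r / 2) - ((N : ℝ) - 1) * phi' r
        = (c - ((N : ℝ) - 1) / (r / 2) * phi' r) * (r - r / 2) := by
          field_simp [hr.1.ne']; ring
      _ ≤ (c - ((N : ℝ) - 1) / ξ * phi' ξ) * (r - r / 2) := by gcongr; linarith [hr.1]
      _ < π := hmvt ▸ hrise
  have hk : ((N : ℝ) - 1) * k * (r / 2) ≤ c * (r / 2) :=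
    mul_le_mul_of_nonneg_right (H.sub_one_mul_le_speed hN hc) hr2.1.le
  rw [sub_le_comm, le_div_iff₀ hN1]
  linarith

theorem monotoneOn (H : IsTranslatingProfile N k c phi phi' phi'') (hN : 2 ≤ N) (hc : 0 ≤ c) :
    MonotoneOn phi (Icc 0 1) :=
  monotoneOn_of_hasDerivWithinAt_nonneg (convex_Icc 0 1) H.1
    (fun x hx => (H.hasDerivAt (by rwa [interior_Icc] at hx)).hasDerivWithinAt)
    (fun x hx => H.slope_nonneg hN hc (Ioo_subset_Ioc_self (by rwa [interior_Icc] at hx)))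

theorem le_profile (H : IsTranslatingProfile N k c phi phi' phi'') (hN : 2 ≤ N)
    (hc : 0 ≤ c) (hr : r ∈ Ioc 0 1) : r ^ 2 / 8 * k - r / 2 * (π / (N - 1)) ≤ phi r := by
  have hr2 : r / 2 ∈ Ioc 0 1 := ⟨half_pos hr.1, by linarith [hr.2]⟩
  obtain ⟨ξ, hξ, hmvt⟩ := exists_hasDerivAt_eq_slope phi phi' (half_lt_self hr.1)
    (H.1.mono fun x hx => ⟨hr2.1.le.trans hx.1, hx.2.trans hr.2⟩)
    (fun x hx => H.hasDerivAt ⟨hr2.1.trans hx.1, hx.2.trans_le hr.2⟩)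
  rw [eq_div_iff (by linarith [hr.1])] at hmvt
  have hξ' : ξ ∈ Ioc 0 1 := ⟨hr2.1.trans hξ.1, hξ.2.le.trans hr.2⟩
  have hslope : r / 4 * k - π / (N - 1) ≤ phi' ξ := by
    calc r / 4 * k - π / (N - 1) = r / 2 / 2 * k - π / (N - 1) := by ring
      _ ≤ phi' (r / 2) := H.le_slope hN hc hr2
      _ ≤ phi' ξ := H.monotoneOn_slope hN hc hr2 hξ' hξ.1.le
  have hhalf : 0 ≤ phi (r / 2) := H.2.2.2.2.2.1 ▸
    H.monotoneOn hN hc ⟨le_rfl, zero_le_one⟩ (Ioc_subset_Icc_self hr2) hr2.1.le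
  calc r ^ 2 / 8 * k - r / 2 * (π / (N - 1)) = r / 2 * (r / 4 * k - π / (N - 1)) := by ring
    _ ≤ r / 2 * phi' ξ := mul_le_mul_of_nonneg_left hslope hr2.1.le
    _ = phi r - phi (r / 2) := by rw [← hmvt]; ring
    _ ≤ phi r := by linarith

end IsTranslatingProfile

theorem profile_tendsto_atTop_general (N : ℕ) (hN : 2 ≤ N)
    (c : ℝ → ℝ) (phi phi' phi'' : ℝ → ℝ → ℝ)
    (hc : ∀ k > (0:ℝ), 0 < c k)
    (hprof : ∀ k > (0:ℝ), IsTranslatingProfile N k (c k) (phi k) (phi' k) (phi'' k)) :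
    ∀ r ∈ Ioc (0:ℝ) 1,
      Tendsto (fun k => phi k r) atTop atTop ∧ Tendsto (fun k => phi' k r) atTop atTop := by
  intro r hr
  constructor
  · exact tendsto_atTop_of_affine_le (by have := hr.1; positivity)
      ((eventually_gt_atTop 0).mono fun k hk => (hprof k hk).le_profile hN (hc k hk).le hr)
  · exact tendsto_atTop_of_affine_le (half_pos hr.1)
      ((eventually_gt_atTop 0).mono fun k hk => (hprof k hk).le_slope hN (hc k hk).le hr)

/-- for the (unique) translating profiles `φ(·;k)` with speed `c(k)`,
both `φ(r;k) → ∞` and `φ'(r;k) → ∞` as `k → ∞`, for every fixed `r ∈ (0,1]`. -/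
theorem profile_tendsto_atTop (N : ℕ) (hN : 2 ≤ N)
    (c : ℝ → ℝ) (phi phi' phi'' : ℝ → ℝ → ℝ)
    (hc : ∀ k > (0:ℝ), 0 < c k)
    (hprof : ∀ k > (0:ℝ), IsTranslatingProfile N k (c k) (phi k) (phi' k) (phi'' k))
    (huniq : ∀ k > (0:ℝ), ∀ c₂ : ℝ, ∀ psi psi' psi'' : ℝ → ℝ, 0 < c₂ →
      IsTranslatingProfile N k c₂ psi psi' psi'' →
      c₂ = c k ∧ EqOn psi (phi k) (Icc 0 1)) :
    ∀ r ∈ Ioc (0:ℝ) 1,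
      Tendsto (fun k => phi k r) atTop atTop ∧ Tendsto (fun k => phi' k r) atTop atTop :=
  profile_tendsto_atTop_general N hN c phi phi' phi'' hc hprof
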